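/- For every integer n ≥ 5, the maximum number of fixed points of a reverse alternating permutation of [n] is ⌈(n+1)/2⌉; that is, every reverse alternating permutation of [n] has at most ⌈(n+1)/2⌉ fixed points, and there exists a reverse alternating permutation of [n] with exactly ⌈(n+1)/2⌉ fixed points. -/

import Mathlib

/-- `π` is an alternating permutation: `π 1 > π 2 < π 3 > π 4 < ⋯`
(here stated with 0-indexed positions). -/
def IsAlternating {n : ℕ} (π : Equiv.Perm (Fin n)) : Prop :=
  ∀ i : ℕ, ∀ h : i + 1 < n,
    if i % 2 = 0 then π ⟨i + 1, h⟩ < π ⟨i, Nat.lt_of_succ_lt h⟩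
    else π ⟨i, Nat.lt_of_succ_lt h⟩ < π ⟨i + 1, h⟩

/-- `π` is a reverse alternating permutation: `π 1 < π 2 > π 3 < π 4 > ⋯`
(here stated with 0-indexed positions). -/
def IsRevAlternating {n : ℕ} (π : Equiv.Perm (Fin n)) : Prop :=
  ∀ i : ℕ, ∀ h : i + 1 < n,
    if i % 2 = 0 then π ⟨i, Nat.lt_of_succ_lt h⟩ < π ⟨i + 1, h⟩
    else π ⟨i + 1, h⟩ < π ⟨i, Nat.lt_of_succ_lt h⟩

/-- The number of fixed points of a permutation of `Fin n`. -/
def fixedPointCount {n : ℕ} (π : Equiv.Perm (Fin n)) : ℕ :=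
  (Finset.univ.filter fun i => π i = i).card

/-- The underlying function of the extremal reverse alternating permutation. -/
def gfun (n i : ℕ) : ℕ :=
  if i = 0 then 0
  else if i = 1 then 2 * ((n - 1) / 2)
  else if i = 2 then 2
  else if i = 4 then 1
  else if i % 2 = 1 then i
  else i - 2

lemma gfun_lt (n : ℕ) (hn : 5 ≤ n) {i : ℕ} (hi : i < n) : gfun n i < n := by
  unfold gfun; split_ifs <;> omega

lemma gfun_inj (n : ℕ) (hn : 5 ≤ n) {i j : ℕ} (hi : i < n) (hj : j < n)
    (h : gfun n i = gfun n j) : i = j := by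
  unfold gfun at h; split_ifs at h <;> omega

/-- The predicate describing fixed points of the extremal permutation. -/
def qfun (i : ℕ) : Prop := i = 0 ∨ i = 2 ∨ (i % 2 = 1 ∧ i ≠ 1)

instance : DecidablePred qfun := fun i => by unfold qfun; infer_instance

lemma gfun_fixed (n : ℕ) (hn : 5 ≤ n) (i : ℕ) : gfun n i = i ↔ qfun i := by
  unfold gfun qfun; split_ifs <;> omega

lemma count_qfun : ∀ n : ℕ, 5 ≤ n → ((Finset.range n).filter qfun).card = n / 2 + 1 := by
  intro n hn
  induction n with
  | zero => omega
  | succ m ih =>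
    rcases Nat.lt_or_ge m 5 with hm | hm
    · have : m = 4 := by omega
      subst this
      decide
    · have hc := ih hm
      rw [Finset.range_add_one, Finset.filter_insert]
      by_cases hq : qfun m
      · rw [if_pos hq, Finset.card_insert_of_notMem (by simp), hc]
        have : m % 2 = 1 := by
          rcases hq with h | h | h <;> omega
        omega
      · rw [if_neg hq, hc]
        have : m % 2 = 0 := by
          by_contra h
          exact hq (Or.inr (Or.inr ⟨by omega, by omega⟩))
        omega

/-- The extremal reverse alternating permutation. -/
noncomputable def myPerm (n : ℕ) (hn : 5 ≤ n) : Equiv.Perm (Fin n) :=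
  Equiv.ofBijective (fun i => ⟨gfun n i.val, gfun_lt n hn i.isLt⟩)
    (Finite.injective_iff_bijective.mp
      (fun i j h => Fin.ext (gfun_inj n hn i.isLt j.isLt (congrArg Fin.val h))))

lemma myPerm_apply (n : ℕ) (hn : 5 ≤ n) (i : Fin n) :
    myPerm n hn i = ⟨gfun n i.val, gfun_lt n hn i.isLt⟩ :=
  Equiv.ofBijective_apply _ _ _

lemma gfun_lt_succ (n i : ℕ) (hn : 5 ≤ n) (h : i + 1 < n) (hpar : i % 2 = 0) :
    gfun n i < gfun n (i + 1) := by
  unfold gfun; split_ifs <;> first | contradiction | omega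

lemma gfun_succ_lt (n i : ℕ) (hn : 5 ≤ n) (h : i + 1 < n) (hpar : ¬ i % 2 = 0) :
    gfun n (i + 1) < gfun n i := by
  unfold gfun; split_ifs <;> first | contradiction | omega

lemma myPerm_revAlt (n : ℕ) (hn : 5 ≤ n) : IsRevAlternating (myPerm n hn) := by
  intro i h
  split_ifs with hpar
  · rw [myPerm_apply, myPerm_apply, Fin.mk_lt_mk]
    exact gfun_lt_succ n i hn h hpar
  · rw [myPerm_apply, myPerm_apply, Fin.mk_lt_mk]
    exact gfun_succ_lt n i hn h hpar

/-- For every integer `n ≥ 5`, the maximum number of fixed points of a reverse alternating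
permutation of `[n]` is `⌈(n+1)/2⌉`. -/
theorem max_fixed_points_reverse_alternating (n : ℕ) (hn : 5 ≤ n) :
    (∀ π : Equiv.Perm (Fin n), IsRevAlternating π → fixedPointCount π ≤ (n + 2) / 2) ∧
    ∃ π : Equiv.Perm (Fin n), IsRevAlternating π ∧ fixedPointCount π = (n + 2) / 2 := by
  constructor
  · -- upper bound
    intro π hπ
    have key : fixedPointCount π ≤ (Finset.range (n / 2 + 1)).card := by
      apply Finset.card_le_card_of_injOn (fun i => (i.val + 1) / 2)
      · intro i _
        simp only [Finset.mem_coe, Finset.mem_range]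
        have := i.isLt
        omega
      · intro i hi j hj hij
        simp only [Finset.mem_coe, Finset.mem_filter] at hi hj
        by_contra hne
        -- wlog i.val < j.val
        have main : ∀ a b : Fin n, π a = a → π b = b → (a.val + 1) / 2 = (b.val + 1) / 2 →
            a.val < b.val → False := by
          intro a b ha hb hab hlt
          have hb1 : b.val = a.val + 1 := by omega
          have hodd : a.val % 2 = 1 := by omega
          have hlt2 : a.val + 1 < n := hb1 ▸ b.isLt
          have := hπ a.val hlt2
          rw [if_neg (by omega)] at this
          have e1 : (⟨a.val, Nat.lt_of_succ_lt hlt2⟩ : Fin n) = a := rfl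
          have e2 : (⟨a.val + 1, hlt2⟩ : Fin n) = b := Fin.ext hb1.symm
          rw [e1, e2, ha, hb] at this
          exact absurd (Fin.lt_def.mp this) (by omega)
        have hne' : i.val ≠ j.val := fun hv => hne (Fin.ext hv)
        rcases Nat.lt_or_ge i.val j.val with hlt | hge
        · exact main i j hi.2 hj.2 hij hlt
        · exact main j i hj.2 hi.2 hij.symm (by omega)
    rw [Finset.card_range] at key
    omega
  · -- construction
    refine ⟨myPerm n hn, myPerm_revAlt n hn, ?_⟩
    have hfix : (Finset.univ.filter fun i : Fin n => myPerm n hn i = i) =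
        Finset.univ.filter fun i : Fin n => qfun i.val := by
      apply Finset.filter_congr
      intro i _
      rw [myPerm_apply]
      constructor
      · intro h
        exact (gfun_fixed n hn i.val).mp (congrArg Fin.val h)
      · intro h
        exact Fin.ext ((gfun_fixed n hn i.val).mpr h)
    have hcard : (Finset.univ.filter fun i : Fin n => qfun i.val).card =
        ((Finset.range n).filter qfun).card := by
      apply Finset.card_bij (fun a _ => a.val)
      · intro a ha
        simp only [Finset.mem_filter, Finset.mem_range, Finset.mem_univ, true_and] at *
        exact ⟨a.isLt, ha⟩
      · intro a _ b _ hab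
        exact Fin.ext hab
      · intro b hb
        simp only [Finset.mem_filter, Finset.mem_range] at hb
        exact ⟨⟨b, hb.1⟩, by simp [hb.2], rfl⟩
    rw [fixedPointCount, hfix, hcard, count_qfun n hn]
    omega
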